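/- For every h ∈ ℍ₁, the projection Pr_{V₁} h equals the smallest concave majorant of h on [0,∞); that is, Pr_{V₁} h is concave, satisfies (Pr_{V₁} h)(t) ≥ h(t) for all t ≥ 0, and (Pr_{V₁} h)(t) ≤ c(t) for all t ≥ 0 whenever c : [0,∞) → ℝ is concave with c ≥ h pointwise. -/

import Mathlib

open MeasureTheory Set Filter
open scoped ENNReal NNReal InnerProductSpace

noncomputable section

/-- Lebesgue measure on `(0, ∞)`. -/
def muPos : Measure ℝ := volume.restrict (Set.Ioi (0:ℝ))

/-- `L²([0,∞))`, the space of derivatives.  It is isometric to the Cameron–Martin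
space `ℍ₁` of the Wiener process via `h ↦ h'`, `h(t) = ∫₀ᵗ h'(s) ds`; we identify
`ℍ₁` with this Hilbert space. -/
abbrev E : Type := Lp ℝ 2 muPos

/-- The Cameron–Martin function with derivative `φ`:  `t ↦ ∫₀ᵗ φ(s) ds`. -/
def primitive (φ : E) (t : ℝ) : ℝ := ∫ s in Set.Ioc (0:ℝ) t, φ s

/-- `V₁`: elements of `ℍ₁` whose derivative admits a non-increasing version on `[0,∞)`. -/
def V1 : Set E := {φ | ∃ ψ : ℝ → ℝ, AntitoneOn ψ (Set.Ici 0) ∧ (⇑φ) =ᵐ[muPos] ψ}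

/-- The polar cone of a set in a real inner product space. -/
def polar {H : Type*} [NormedAddCommGroup H] [InnerProductSpace ℝ H] (A : Set H) : Set H :=
  {x | ∀ y ∈ A, ⟪x, y⟫_ℝ ≤ 0}

/-- `p` is the metric projection of `x` on `A` (the nearest point of `A` to `x`). -/
def IsProj {H : Type*} [NormedAddCommGroup H] (A : Set H) (x p : H) : Prop :=
  p ∈ A ∧ ∀ y ∈ A, ‖x - p‖ ≤ ‖x - y‖

/-- `ℍ_d` as a Hilbert space: `d`-tuples of elements of `ℍ₁` (identified with their
derivatives), with inner product `⟪h,g⟫ = ∑ i, ⟪hᵢ, gᵢ⟫`. -/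
abbrev HD (d : ℕ) : Type := PiLp 2 (fun _ : Fin d => E)

/-- The additive function `t ↦ ∑ i, ∫₀^{tᵢ} φᵢ(s) ds` of `ℍ_d` associated with `Φ`. -/
def addPrim {d : ℕ} (Φ : HD d) (t : Fin d → ℝ) : ℝ := ∑ i, primitive (Φ i) (t i)

/-- `V₂ = {h = h₁ + ⋯ + h_d ∈ ℍ_d : hᵢ ∈ V₁ for all i}`. -/
def V2 {d : ℕ} : Set (HD d) := {Φ | ∀ i, Φ i ∈ V1}

/-!
Let `ψ` be a non-increasing version of `p'`; then `primitive p = ∫ ψ` is concave. The projection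
onto the convex cone `V₁` is characterised by `φ - p ∈ polar V₁` and `⟪φ - p, p⟫ = 0`. Testing the
polar condition against `1_{(0,t]} ∈ V₁` gives `primitive φ ≤ primitive p`. By the layer-cake
formula `ψ = ∫₀^∞ 1_{(0,T(l)]} dl` with `T(l) = sup {ψ > l}`, the orthogonality reads
`∫₀^∞ (primitive φ - primitive p)(T(l)) dl = 0` with a nonpositive integrand, so the two primitives
agree at `T(l)` for a.e. `l > 0`.

The tangent of slope `l` to `primitive p` at `T(l)` lies above `primitive p`, and at such a
contact point it starts below any concave majorant `c` of `primitive φ`. Interpolating between two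
tangents whose slopes are just above and just below `ψ(t)` bounds `primitive p t` by `c t` up to an
arbitrarily small error. When `ψ(t) = 0` there is no tangent of smaller slope; instead
`c ≥ primitive φ ≥ -‖φ‖√t` forces the concave `c` to be non-decreasing.
-/

lemma muPos_restrict_of_subset {A : Set ℝ} (hA : A ⊆ Ioi 0) :
    muPos.restrict A = volume.restrict A := by
  rw [muPos, Measure.restrict_restrict_of_subset hA]

lemma muPos_Ioi_eq_top (a : ℝ) : muPos (Ioi a) = ∞ := by
  rw [muPos, Measure.restrict_apply measurableSet_Ioi, Ioi_inter_Ioi, Real.volume_Ioi]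

instance : SFinite muPos := by unfold muPos; infer_instance

section MemLp

variable {f : ℝ → ℝ} {q : ℝ≥0∞}

lemma MeasureTheory.MemLp.exists_abs_lt (hf : MemLp f q muPos) (hq0 : q ≠ 0) (hq : q ≠ ∞) {ε : ℝ}
    (hε : 0 < ε) (a : ℝ) : ∃ t, a < t ∧ |f t| < ε := by
  by_contra! h
  have hfin := hf.meas_ge_lt_top' hq0 hq (ENNReal.ofReal_pos.2 hε).ne'
  refine hfin.ne (top_unique ((muPos_Ioi_eq_top a).symm.le.trans (measure_mono fun t ht => ?_)))
  simpa [← ofReal_norm] using ENNReal.ofReal_le_ofReal (h t ht)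

lemma Antitone.nonneg_of_memLp (hf : Antitone f) (hfq : MemLp f q muPos) (hq0 : q ≠ 0)
    (hq : q ≠ ∞) (s : ℝ) : 0 ≤ f s := by
  by_contra! hs
  obtain ⟨t, hst, ht⟩ := hfq.exists_abs_lt hq0 hq (neg_pos.2 hs) s
  have := hf hst.le
  rw [abs_lt] at ht
  linarith

lemma Antitone.bddAbove_lt_of_memLp (hf : Antitone f) (hfq : MemLp f q muPos) (hq0 : q ≠ 0)
    (hq : q ≠ ∞) {l : ℝ} (hl : 0 < l) : BddAbove {s | l < f s} := by
  obtain ⟨t, -, ht⟩ := hfq.exists_abs_lt hq0 hq hl 0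
  refine ⟨t, fun s (hs : l < f s) => le_of_not_gt fun hts => ?_⟩
  linarith [hf hts.le, (abs_lt.1 ht).2]

lemma MeasureTheory.MemLp.integrableOn_Ioc (hf : MemLp f 2 muPos) {x : ℝ} (hx : 0 ≤ x) (y : ℝ) :
    IntegrableOn f (Ioc x y) := by
  have := hf.restrict (Ioc x y)
  rw [muPos_restrict_of_subset fun s hs => hx.trans_lt hs.1] at this
  exact this.integrable one_le_two

lemma MeasureTheory.MemLp.intervalIntegrable (hf : MemLp f 2 muPos) {x y : ℝ} (hx : 0 ≤ x)
    (hy : 0 ≤ y) : IntervalIntegrable f volume x y :=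
  intervalIntegrable_iff.2 (hf.integrableOn_Ioc (le_min hx hy) _)

end MemLp

lemma primitive_eq_intervalIntegral {p : E} {ψ : ℝ → ℝ} (hae : ⇑p =ᵐ[muPos] ψ) {t : ℝ}
    (ht : 0 ≤ t) : primitive p t = ∫ s in 0..t, ψ s := by
  rw [intervalIntegral.integral_of_le ht, primitive]
  refine integral_congr_ae ?_
  rw [← muPos_restrict_of_subset fun s hs => hs.1]
  exact ae_restrict_of_ae hae

lemma muPos_Ioc_ne_top (t : ℝ) : muPos (Ioc 0 t) ≠ ∞ :=
  ((Measure.restrict_le_self _).trans_lt measure_Ioc_lt_top).ne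

/-- `1_{(0,t]}`, the derivative of `s ↦ min s t`. -/
def indicatorIoc (t : ℝ) : E := indicatorConstLp 2 measurableSet_Ioc (muPos_Ioc_ne_top t) 1

lemma inner_indicatorIoc (t : ℝ) (f : E) : ⟪indicatorIoc t, f⟫_ℝ = primitive f t := by
  rw [indicatorIoc, L2.inner_indicatorConstLp_eq_setIntegral_inner,
    muPos_restrict_of_subset fun s hs => hs.1, primitive]
  simp

lemma norm_indicatorIoc {t : ℝ} (ht : 0 ≤ t) : ‖indicatorIoc t‖ = √t := by
  rw [indicatorIoc, norm_indicatorConstLp two_ne_zero ENNReal.ofNat_ne_top, measureReal_def,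
    muPos, Measure.restrict_apply measurableSet_Ioc,
    inter_eq_self_of_subset_left fun s hs => hs.1, Real.volume_Ioc, sub_zero,
    ENNReal.toReal_ofReal ht, norm_one, one_mul, Real.sqrt_eq_rpow]
  norm_num

lemma abs_primitive_le (f : E) {t : ℝ} (ht : 0 ≤ t) : |primitive f t| ≤ ‖f‖ * √t := by
  rw [← inner_indicatorIoc, mul_comm, ← norm_indicatorIoc ht]
  exact abs_real_inner_le_norm _ _

lemma indicatorIoc_mem_V1 (t : ℝ) : indicatorIoc t ∈ V1 := by
  refine ⟨(Iic t).indicator 1, fun x _ y _ hxy => ?_, ?_⟩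
  · by_cases hy : y ≤ t
    · simp [indicator, hxy.trans hy, hy]
    · simp only [indicator, mem_Iic, hy, if_false]
      split_ifs <;> norm_num
  · filter_upwards [show ⇑(indicatorIoc t) =ᵐ[muPos] (Ioc 0 t).indicator 1 from
      indicatorConstLp_coeFn, ae_restrict_mem measurableSet_Ioi]
      with s hs (hs0 : 0 < s)
    simp [hs, indicator, hs0]

section Projection

variable {H : Type*} [NormedAddCommGroup H] [InnerProductSpace ℝ H] {K : Set H} {x p : H}

lemma IsProj.inner_sub_nonpos (hK : Convex ℝ K) (hp : IsProj K x p) :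
    ∀ y ∈ K, ⟪x - p, y - p⟫_ℝ ≤ 0 := by
  refine (norm_eq_iInf_iff_real_inner_le_zero hK hp.1).1 (le_antisymm ?_ ?_)
  · have : Nonempty K := ⟨⟨p, hp.1⟩⟩
    exact le_ciInf fun y => hp.2 y y.2
  · exact ciInf_le ⟨0, by rintro _ ⟨y, rfl⟩; positivity⟩ (⟨p, hp.1⟩ : K)

variable (hK : Convex ℝ K) (hadd : ∀ y ∈ K, ∀ z ∈ K, y + z ∈ K) (hp : IsProj K x p)
include hK hadd hp

lemma IsProj.sub_mem_polar : x - p ∈ polar K := fun y hy => by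
  simpa using hp.inner_sub_nonpos hK (y + p) (hadd y hy p hp.1)

lemma IsProj.inner_sub_self (h0 : (0 : H) ∈ K) : ⟪x - p, p⟫_ℝ = 0 := by
  refine le_antisymm (hp.sub_mem_polar hK hadd p hp.1) ?_
  simpa using hp.inner_sub_nonpos hK 0 h0

end Projection

lemma add_mem_V1 {f g : E} (hf : f ∈ V1) (hg : g ∈ V1) : f + g ∈ V1 := by
  obtain ⟨ψf, hψf, hf⟩ := hf
  obtain ⟨ψg, hψg, hg⟩ := hg
  exact ⟨ψf + ψg, hψf.add hψg, (Lp.coeFn_add f g).trans (hf.add hg)⟩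

lemma smul_mem_V1 {c : ℝ} (hc : 0 ≤ c) {f : E} (hf : f ∈ V1) : c • f ∈ V1 := by
  obtain ⟨ψ, hψ, hf⟩ := hf
  exact ⟨c • ψ, fun _ hx _ hy hxy => smul_le_smul_of_nonneg_left (hψ hx hy hxy) hc,
    (Lp.coeFn_smul c f).trans (hf.const_smul c)⟩

lemma zero_mem_V1 : (0 : E) ∈ V1 := ⟨0, antitoneOn_const, Lp.coeFn_zero ℝ 2 muPos⟩

lemma convex_V1 : Convex ℝ V1 := fun _ hf _ hg _ _ ha hb _ =>
  add_mem_V1 (smul_mem_V1 ha hf) (smul_mem_V1 hb hg)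

lemma primitive_le_of_isProj {φ p : E} (hp : IsProj V1 φ p) (t : ℝ) :
    primitive φ t ≤ primitive p t := by
  have := hp.sub_mem_polar convex_V1 (fun _ hf _ hg => add_mem_V1 hf hg) _ (indicatorIoc_mem_V1 t)
  rw [real_inner_comm, inner_sub_right, inner_indicatorIoc, inner_indicatorIoc] at this
  linarith

lemma exists_antitone_of_mem_V1 {f : E} (hf : f ∈ V1) :
    ∃ ψ : ℝ → ℝ, Antitone ψ ∧ ⇑f =ᵐ[muPos] ψ := by
  obtain ⟨ψ, hψ, hf⟩ := hf
  refine ⟨fun s => ψ (max s 0), fun s t hst => hψ (le_max_right s 0) (le_max_right t 0)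
    (max_le_max_right 0 hst), hf.trans ?_⟩
  filter_upwards [ae_restrict_mem measurableSet_Ioi] with s (hs : 0 < s)
  rw [max_eq_left hs.le]

lemma concaveOn_of_le_add_mul {S : Set ℝ} (hS : Convex ℝ S) {f g : ℝ → ℝ}
    (h : ∀ x ∈ S, ∀ y ∈ S, f y ≤ f x + g x * (y - x)) : ConcaveOn ℝ S f := by
  refine ⟨hS, fun x hx y hy a b ha hb hab => ?_⟩
  have hz := hS hx hy ha hb hab
  have hx' := mul_le_mul_of_nonneg_left (h _ hz x hx) ha
  have hy' := mul_le_mul_of_nonneg_left (h _ hz y hy) hb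
  simp only [smul_eq_mul] at hx' hy' ⊢
  have hb' : b = 1 - a := by linarith
  subst hb'
  nlinarith

section Primitive

variable {p : E} {ψ : ℝ → ℝ} (hae : ⇑p =ᵐ[muPos] ψ)
include hae

lemma primitive_le_add_mul {s m : ℝ} (hs : 0 ≤ s) (hlo : ∀ x, 0 < x → x < s → m ≤ ψ x)
    (hhi : ∀ x, s < x → ψ x ≤ m) {t : ℝ} (ht : 0 ≤ t) :
    primitive p t ≤ primitive p s + m * (t - s) := by
  have hψ : MemLp ψ 2 muPos := (Lp.memLp p).ae_eq hae
  rw [primitive_eq_intervalIntegral hae ht, primitive_eq_intervalIntegral hae hs,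
    ← intervalIntegral.integral_add_adjacent_intervals (hψ.intervalIntegrable le_rfl hs)
      (hψ.intervalIntegrable hs ht), add_le_add_iff_left]
  rcases le_total s t with hst | hts
  · have := intervalIntegral.integral_mono_on_of_le_Ioo hst (hψ.intervalIntegrable hs ht)
      intervalIntegrable_const fun x hx => hhi x hx.1
    simp only [intervalIntegral.integral_const, smul_eq_mul] at this
    linarith
  · have := intervalIntegral.integral_mono_on_of_le_Ioo hts intervalIntegrable_const
      (hψ.intervalIntegrable ht hs) fun x hx => hlo x (ht.trans_lt hx.1) hx.2
    rw [intervalIntegral.integral_symm t s]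
    simp only [intervalIntegral.integral_const, smul_eq_mul] at this
    linarith

lemma primitive_concaveOn (hψ : Antitone ψ) : ConcaveOn ℝ (Ici 0) (primitive p) :=
  concaveOn_of_le_add_mul (convex_Ici 0) fun _ hs _ ht =>
    primitive_le_add_mul hae hs (fun _ _ hx => hψ hx.le) (fun _ hx => hψ hx.le) ht

end Primitive

/-- `sup {s > 0 | l < ψ s}` (`0` if that set is empty): for antitone `ψ`, the point where the
primitive of `ψ` has slope `l`. -/
def levelSup (ψ : ℝ → ℝ) (l : ℝ) : ℝ := sSup (insert 0 {s | 0 < s ∧ l < ψ s})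

section LevelSup

variable {ψ : ℝ → ℝ} {l : ℝ}

lemma levelSup_lt_of_lt {s : ℝ} (hs : 0 < s) (h : s < levelSup ψ l) (hψ : Antitone ψ) :
    l < ψ s := by
  obtain ⟨x, hx, hsx⟩ := exists_lt_of_lt_csSup (insert_nonempty _ _) h
  rcases hx with rfl | hx
  · exact absurd (hs.trans hsx) (lt_irrefl 0)
  · exact hx.2.trans_le (hψ hsx.le)

variable (hbdd : BddAbove {s | l < ψ s})
include hbdd

lemma bddAbove_insert_levelSet : BddAbove (insert 0 {s | 0 < s ∧ l < ψ s}) :=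
  (hbdd.mono fun _ hs => hs.2).insert 0

lemma levelSup_nonneg : 0 ≤ levelSup ψ l :=
  le_csSup (bddAbove_insert_levelSet hbdd) (mem_insert 0 _)

lemma le_levelSup {s : ℝ} (hs : 0 < s) (h : l < ψ s) : s ≤ levelSup ψ l :=
  le_csSup (bddAbove_insert_levelSet hbdd) (mem_insert_of_mem _ ⟨hs, h⟩)

lemma levelSet_ae_eq_Ioc (hψ : Antitone ψ) :
    {s | 0 < s ∧ l < ψ s} =ᵐ[volume] Ioc 0 (levelSup ψ l) := by
  refine (ae_eq_set.2 ⟨?_, ?_⟩)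
  · refine measure_mono_null (fun s hs => ?_) measure_empty
    exact hs.2 ⟨hs.1.1, le_levelSup hbdd hs.1.1 hs.1.2⟩
  · refine measure_mono_null (fun s hs => ?_) (Real.volume_singleton (a := levelSup ψ l))
    by_contra hne
    exact hs.2 ⟨hs.1.1, levelSup_lt_of_lt hs.1.1 (lt_of_le_of_ne hs.1.2 hne) hψ⟩

end LevelSup

lemma primitive_le_tangent_levelSup {p : E} {ψ : ℝ → ℝ} (hae : ⇑p =ᵐ[muPos] ψ)
    (hψ : Antitone ψ) {l : ℝ} (hbdd : BddAbove {s | l < ψ s}) {t : ℝ} (ht : 0 ≤ t) :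
    primitive p t ≤ primitive p (levelSup ψ l) + l * (t - levelSup ψ l) := by
  have hT := levelSup_nonneg hbdd
  refine primitive_le_add_mul hae hT (fun _ hx hxT => (levelSup_lt_of_lt hx hxT hψ).le)
    (fun _ hx => ?_) ht
  exact le_of_not_gt fun h => (le_levelSup hbdd (hT.trans_lt hx) h).not_gt hx

lemma levelSup_le_of_lt {ψ : ℝ → ℝ} (hψ : Antitone ψ) {l t : ℝ} (ht : 0 ≤ t) (hl : ψ t < l) :
    levelSup ψ l ≤ t := by
  refine csSup_le (insert_nonempty _ _) ?_
  rintro x (rfl | ⟨-, hx⟩)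
  · exact ht
  · exact le_of_not_gt fun htx => (hx.trans_le (hψ htx.le)).not_gt hl

section LayerCake

variable {α : Type*} [MeasurableSpace α] {μ : Measure α} [SFinite μ] {g ψ : α → ℝ}

lemma integral_indicator_Ioo_zero {c : ℝ} {a : ℝ} (ha : 0 ≤ a) :
    ∫ l, (Ioo 0 a).indicator (fun _ => c) l = c * a := by
  rw [integral_indicator_const _ measurableSet_Ioo, Real.volume_real_Ioo_of_le ha, sub_zero,
    smul_eq_mul, mul_comm]

theorem integral_mul_eq_integral_Ioi_setIntegral (hg : AEStronglyMeasurable g μ)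
    (hψm : Measurable ψ) (hψ : ∀ x, 0 ≤ ψ x) (hint : Integrable (fun x => g x * ψ x) μ) :
    IntegrableOn (fun l => ∫ x in {x | l < ψ x}, g x ∂μ) (Ioi 0) ∧
      ∫ x, g x * ψ x ∂μ = ∫ l in Ioi 0, ∫ x in {x | l < ψ x}, g x ∂μ := by
  set A : Set (α × ℝ) := {z | 0 < z.2 ∧ z.2 < ψ z.1}
  have hA : MeasurableSet A := (measurableSet_lt measurable_const measurable_snd).inter
    (measurableSet_lt measurable_snd (hψm.comp measurable_fst))
  set H : α × ℝ → ℝ := A.indicator fun z => g z.1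
  have hslice (x : α) : (fun l => H (x, l)) = (Ioo 0 (ψ x)).indicator fun _ => g x := rfl
  have hsection (l : ℝ) :
      ∫ x, H (x, l) ∂μ = (Ioi 0).indicator (fun l => ∫ x in {x | l < ψ x}, g x ∂μ) l := by
    by_cases hl : 0 < l
    · have : (fun x => H (x, l)) = {x | l < ψ x}.indicator g := by
        ext x; simp [H, A, indicator, hl]
      rw [this, integral_indicator (measurableSet_lt measurable_const hψm),
        indicator_of_mem (show l ∈ Ioi 0 from hl)]
    · have : (fun x => H (x, l)) = 0 := by
        ext x; simp [H, A, hl]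
      rw [this, indicator_of_notMem (show l ∉ Ioi 0 from hl)]
      exact integral_zero _ _
  have hH : Integrable H (μ.prod volume) := by
    refine (integrable_prod_iff ((hg.comp_fst).indicator hA)).2 ⟨ae_of_all _ fun x => ?_, ?_⟩
    · rw [hslice, integrable_indicator_iff measurableSet_Ioo]
      exact integrableOn_const measure_Ioo_lt_top.ne
    · refine hint.norm.congr (ae_of_all _ fun x => ?_)
      simp only [norm_indicator_eq_indicator_norm, norm_mul, Real.norm_of_nonneg (hψ x)]
      exact (integral_indicator_Ioo_zero (hψ x)).symm
  have hW := hH.integral_prod_right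
  simp only [hsection] at hW
  refine ⟨(integrable_indicator_iff measurableSet_Ioi).1 hW, ?_⟩
  calc ∫ x, g x * ψ x ∂μ = ∫ x, (∫ l, H (x, l)) ∂μ := by
        simp only [hslice, integral_indicator_Ioo_zero (hψ _)]
    _ = ∫ l, (∫ x, H (x, l) ∂μ) := integral_integral_swap (f := fun x l => H (x, l)) hH
    _ = ∫ l in Ioi 0, ∫ x in {x | l < ψ x}, g x ∂μ := by
        simp only [hsection, integral_indicator measurableSet_Ioi]

end LayerCake

lemma primitive_levelSup_ae_eq {φ p : E} (hp : IsProj V1 φ p) {ψ : ℝ → ℝ} (hψ : Antitone ψ)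
    (hae : ⇑p =ᵐ[muPos] ψ) :
    ∀ᵐ l, 0 < l → primitive p (levelSup ψ l) = primitive φ (levelSup ψ l) := by
  have hψ2 : MemLp ψ 2 muPos := (Lp.memLp p).ae_eq hae
  have hψ0 := hψ.nonneg_of_memLp hψ2 two_ne_zero ENNReal.ofNat_ne_top
  have hbdd {l : ℝ} (hl : 0 < l) :=
    hψ.bddAbove_lt_of_memLp hψ2 two_ne_zero ENNReal.ofNat_ne_top hl
  have hW {l : ℝ} (hl : 0 < l) : ∫ x in {x | l < ψ x}, (φ - p) x ∂muPos
      = primitive φ (levelSup ψ l) - primitive p (levelSup ψ l) := by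
    have hset : muPos.restrict {x | l < ψ x} = volume.restrict {x | 0 < x ∧ l < ψ x} := by
      rw [muPos, Measure.restrict_restrict (measurableSet_lt measurable_const hψ.measurable)]
      congr 1
      ext; simp [and_comm]
    rw [hset, setIntegral_congr_set (levelSet_ae_eq_Ioc (hbdd hl) hψ),
      ← muPos_restrict_of_subset fun _ hx => hx.1, ← inner_indicatorIoc, ← inner_indicatorIoc,
      ← inner_sub_right, indicatorIoc, L2.inner_indicatorConstLp_eq_setIntegral_inner]
    simp
  have hint : Integrable (fun x => (φ - p) x * ψ x) muPos :=
    (L2.integrable_inner (𝕜 := ℝ) (φ - p) p).congr <| hae.mono fun x hx => by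
      simp [hx, mul_comm]
  obtain ⟨hWint, hlayer⟩ := integral_mul_eq_integral_Ioi_setIntegral
    (Lp.aestronglyMeasurable (φ - p)) hψ.measurable hψ0 hint
  have hzero : ∫ l in Ioi 0, ∫ x in {x | l < ψ x}, (φ - p) x ∂muPos = 0 := by
    rw [← hlayer, ← hp.inner_sub_self convex_V1 (fun _ hf _ hg => add_mem_V1 hf hg) zero_mem_V1,
      L2.inner_def]
    exact integral_congr_ae (hae.mono fun x hx => by simp [hx, mul_comm])
  have hnonpos : ∀ᵐ l ∂volume.restrict (Ioi 0), ∫ x in {x | l < ψ x}, (φ - p) x ∂muPos ≤ 0 :=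
    (ae_restrict_iff' measurableSet_Ioi).2 <| ae_of_all _ fun l (hl : 0 < l) => by
      rw [hW hl]
      linarith [primitive_le_of_isProj hp (levelSup ψ l)]
  have hae0 := (integral_eq_zero_iff_of_nonneg_ae (hnonpos.mono fun _ h => neg_nonneg.2 h)
    hWint.neg).1 (by rw [integral_neg, hzero, neg_zero])
  filter_upwards [(ae_restrict_iff' measurableSet_Ioi).1 hae0] with l hl hl0
  have := hW hl0
  simp only [Pi.zero_apply, neg_eq_zero] at hl
  linarith [hl hl0]

section Concave

variable {c : ℝ → ℝ} (hc : ConcaveOn ℝ (Ici 0) c)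
include hc

lemma ConcaveOn.monotoneOn_of_neg_mul_sqrt_le {K : ℝ} (hbd : ∀ t, 0 ≤ t → -(K * √t) ≤ c t) :
    MonotoneOn c (Ici 0) := by
  intro r (hr : 0 ≤ r) s hs hrs
  rcases hrs.eq_or_lt with rfl | hrs
  · exact le_rfl
  by_contra! hsr
  set m := (c s - c r) / (s - r)
  have hm : m < 0 := div_neg_of_neg_of_pos (by linarith) (by linarith)
  have hsecant {t : ℝ} (hst : s < t) : c t ≤ c s + m * (t - s) := by
    have := hc.slope_anti_adjacent hr (hr.trans (hrs.trans hst).le) hrs hst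
    rw [div_le_iff₀ (by linarith)] at this
    linarith
  have hlim : Tendsto (fun u : ℝ => c s - m * s + u * (m * u + K)) atTop atBot :=
    tendsto_atBot_add_const_left _ _ <| tendsto_id.atTop_mul_atBot₀ <|
      tendsto_atBot_add_const_right _ K (tendsto_id.const_mul_atTop_of_neg hm)
  obtain ⟨u, hneg, hu⟩ :=
    ((hlim.eventually (eventually_lt_atBot 0)).and (eventually_ge_atTop (s + 1))).exists
  have hu0 : 0 ≤ u := by linarith
  have hsu : s < u ^ 2 := by nlinarith
  have := (hbd _ (sq_nonneg u)).trans (hsecant hsu)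
  rw [Real.sqrt_sq hu0] at this
  nlinarith

lemma ConcaveOn.le_add_of_two_tangents {a t b l l' y : ℝ} (ha : 0 ≤ a) (hat : a ≤ t) (htb : t ≤ b)
    (hl : l' ≤ l) (hya : y ≤ c a + l * (t - a)) (hyb : y ≤ c b + l' * (t - b)) :
    y ≤ c t + t * (l - l') := by
  have ht : 0 ≤ t := ha.trans hat
  have hslack : 0 ≤ t * (l - l') := mul_nonneg ht (sub_nonneg.2 hl)
  rcases hat.eq_or_lt with rfl | hat
  · linarith
  rcases htb.eq_or_lt with rfl | htb
  · linarith
  have hchord := hc.slope_anti_adjacent ha (ht.trans htb.le) hat htb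
  rw [div_le_div_iff₀ (sub_pos.2 htb) (sub_pos.2 hat)] at hchord
  have hweights : (b - t) * (t - a) * (l - l') ≤ (b - a) * (t * (l - l')) := by
    have : (b - t) * (t - a) ≤ (b - a) * t := by nlinarith
    nlinarith
  have hcomb : (b - a) * y ≤ (b - a) * (c t + t * (l - l')) := by
    nlinarith [mul_le_mul_of_nonneg_left hya (sub_pos.2 htb).le,
      mul_le_mul_of_nonneg_left hyb (sub_pos.2 hat).le]
  exact le_of_mul_le_mul_left hcomb (by linarith)

end Concave

lemma primitive_le_of_concave_majorant {φ p : E} (hp : IsProj V1 φ p) {ψ : ℝ → ℝ}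
    (hψ : Antitone ψ) (hae : ⇑p =ᵐ[muPos] ψ) {c : ℝ → ℝ} (hc : ConcaveOn ℝ (Ici 0) c)
    (hmaj : ∀ t, 0 ≤ t → primitive φ t ≤ c t) {t : ℝ} (ht : 0 ≤ t) : primitive p t ≤ c t := by
  rcases ht.eq_or_lt with rfl | ht
  · simpa [primitive] using hmaj 0 le_rfl
  have hψ2 : MemLp ψ 2 muPos := (Lp.memLp p).ae_eq hae
  have hψ0 := hψ.nonneg_of_memLp hψ2 two_ne_zero ENNReal.ofNat_ne_top
  have hbdd {l : ℝ} (hl : 0 < l) :=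
    hψ.bddAbove_lt_of_memLp hψ2 two_ne_zero ENNReal.ofNat_ne_top hl
  have hmono : MonotoneOn c (Ici 0) := hc.monotoneOn_of_neg_mul_sqrt_le fun s hs =>
    (neg_le_of_abs_le (abs_primitive_le φ hs)).trans (hmaj s hs)
  have htangent : ∀ᵐ l, 0 < l → primitive p t ≤ c (levelSup ψ l) + l * (t - levelSup ψ l) := by
    filter_upwards [primitive_levelSup_ae_eq hp hψ hae] with l hl hl0
    linarith [primitive_le_tangent_levelSup hae hψ (hbdd hl0) ht.le, hl hl0,
      hmaj _ (levelSup_nonneg (hbdd hl0))]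
  have hgood {u v : ℝ} (huv : u < v) : ∃ l ∈ Ioo u v,
      0 < l → primitive p t ≤ c (levelSup ψ l) + l * (t - levelSup ψ l) :=
    Measure.exists_mem_of_measure_ne_zero_of_ae (by simp [huv]) (ae_restrict_of_ae htangent)
  refine le_of_forall_pos_le_add fun δ hδ => ?_
  have hε : 0 < δ / (2 * t) := by positivity
  have hεt : t * (δ / (2 * t)) = δ / 2 := by field_simp
  obtain ⟨l, ⟨hl₁, hl₂⟩, hl⟩ := hgood (lt_add_of_pos_right (ψ t) hε)
  have hl0 : 0 < l := (hψ0 t).trans_lt hl₁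
  have ha := levelSup_le_of_lt hψ ht.le hl₁
  rcases (hψ0 t).eq_or_lt with hψt | hψt
  · have hca := hmono (levelSup_nonneg (hbdd hl0)) ht.le ha
    have : l * (t - levelSup ψ l) ≤ t * (δ / (2 * t)) := by
      nlinarith [levelSup_nonneg (hbdd hl0)]
    linarith [hl hl0]
  obtain ⟨l', ⟨hl₁', hl₂'⟩, hl'⟩ := hgood (max_lt (sub_lt_self (ψ t) hε) hψt)
  have hl0' : 0 < l' := (le_max_right _ _).trans_lt hl₁'
  have hb : t ≤ levelSup ψ l' := le_levelSup (hbdd hl0') ht hl₂'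
  have := hc.le_add_of_two_tangents (levelSup_nonneg (hbdd hl0)) ha hb (hl₂'.trans hl₁).le
    (hl hl0) (hl' hl0')
  have : t * (l - l') ≤ t * (2 * (δ / (2 * t))) :=
    mul_le_mul_of_nonneg_left (by linarith [le_max_left (ψ t - δ / (2 * t)) 0]) ht.le
  linarith

/-- for every `h ∈ ℍ₁`, the projection `Pr_{V₁} h` is the smallest
concave majorant of `h` on `[0,∞)`: it is concave on `[0,∞)`, it majorizes `h`,
and it is below every concave majorant of `h`. -/
theorem proj_V1_is_smallest_concave_majorant (φ p : E) (hp : IsProj V1 φ p) :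
    ConcaveOn ℝ (Set.Ici 0) (primitive p) ∧
    (∀ t : ℝ, 0 ≤ t → primitive φ t ≤ primitive p t) ∧
    (∀ c : ℝ → ℝ, ConcaveOn ℝ (Set.Ici 0) c →
      (∀ t : ℝ, 0 ≤ t → primitive φ t ≤ c t) →
      ∀ t : ℝ, 0 ≤ t → primitive p t ≤ c t) := by
  obtain ⟨ψ, hψ, hae⟩ := exists_antitone_of_mem_V1 hp.1
  exact ⟨primitive_concaveOn hae hψ, fun t _ => primitive_le_of_isProj hp t,
    fun c hc hmaj t ht => primitive_le_of_concave_majorant hp hψ hae hc hmaj ht⟩
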